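/- arXiv:1510.08762 — 2 statements merged into one kernel-verified Lean document; each statement's English description precedes it below -/
import Mathlib

section
/- Let V be a finite-dimensional real inner product space and W a finite group generated by orthogonal reflections acting on V. Fix a point x ∈ V. Then the stabilizer W_x = {w ∈ W : w·x = x} is generated by the reflections in W that fix x, i.e., by the reflections r_H with x ∈ H. -/
/-- `g` is the orthogonal reflection in the hyperplane orthogonal to some nonzero vector `v`
(possibly an affine hyperplane through the fixed points of `g`); here, the linear case. -/
def IsOrthoReflection {V : Type*} [NormedAddCommGroup V] [InnerProductSpace ℝ V]
    (g : V ≃ₗᵢ[ℝ] V) : Prop :=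
  ∃ v : V, v ≠ 0 ∧ ∀ w : V, g w = w - (2 * (inner ℝ v w : ℝ) / (inner ℝ v v : ℝ)) • v

/-!
Induction on the codimension of the fixed space `Fix g` of `g ∈ W`. If `g ≠ 1`, some reflection
`r ∈ W` has its hyperplane containing `Fix g`: otherwise `Fix g` contains a regular vector `q`
(a vector space is not a finite union of proper subspaces), and an element of `W` fixing a regular
vector is trivial. Then `r` fixes `x`, and `Fix (r g)` strictly contains `Fix g` (Scherk's argument:
the root of `r` lies in `(Fix g)ᗮ = range (g - 1)`), so `r g` is covered by induction.

That an element fixing a regular vector `q` is trivial is the simple transitivity of `W` on its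
chambers, proved in the classical way: the positive roots (`⟪α, q⟫ > 0`) contain a simple system
`Δ`, a minimal set spanning them as a cone; a simple reflection permutes the positive roots other
than its own; the simple reflections generate `W`; and the exchange condition shortens any word in
them that keeps the positive roots positive down to the empty word.
-/

open scoped RealInnerProductSpace
open Module Submodule

namespace OrthoReflectionGroup

variable {V : Type*} [NormedAddCommGroup V] [InnerProductSpace ℝ V]

noncomputable def rootReflection (α : V) : V ≃ₗᵢ[ℝ] V := (ℝ ∙ α)ᗮ.reflection

theorem rootReflection_apply (α w : V) :
    rootReflection α w = w - (2 * ⟪α, w⟫ / ‖α‖ ^ 2) • α := by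
  rw [rootReflection, reflection_orthogonal_apply, reflection_singleton_apply]
  simp only [RCLike.ofReal_real_eq_id, id]
  module

theorem rootReflection_apply_of_norm_eq_one {α : V} (hα : ‖α‖ = 1) (w : V) :
    rootReflection α w = w - (2 * ⟪α, w⟫) • α := by
  rw [rootReflection_apply, hα, one_pow, div_one]

@[simp]
theorem rootReflection_mul_self (α : V) : rootReflection α * rootReflection α = 1 :=
  reflection_mul_reflection _

@[simp]
theorem rootReflection_inv (α : V) : (rootReflection α)⁻¹ = rootReflection α :=
  Submodule.reflection_inv

@[simp]
theorem rootReflection_rootReflection (α w : V) : rootReflection α (rootReflection α w) = w :=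
  reflection_reflection _ w

@[simp]
theorem rootReflection_apply_self (α : V) : rootReflection α α = -α :=
  reflection_orthogonalComplement_singleton_eq_neg α

theorem rootReflection_apply_eq_self_iff {α w : V} : rootReflection α w = w ↔ ⟪α, w⟫ = 0 :=
  (reflection_eq_self_iff w).trans mem_orthogonal_singleton_iff_inner_right

theorem rootReflection_smul {c : ℝ} (hc : c ≠ 0) (α : V) :
    rootReflection (c • α) = rootReflection α := by
  simp only [rootReflection, span_singleton_smul_eq hc.isUnit]

@[simp]
theorem rootReflection_neg (α : V) : rootReflection (-α) = rootReflection α := by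
  simpa using rootReflection_smul (c := -1) (by norm_num) α

theorem rootReflection_conj (u : V ≃ₗᵢ[ℝ] V) (α : V) :
    u * rootReflection α * u⁻¹ = rootReflection (u α) := by
  have hmap : (ℝ ∙ α)ᗮ.map (u.toLinearEquiv : V →ₗ[ℝ] V) = (ℝ ∙ u α)ᗮ := by
    rw [map_orthogonal_equiv, map_span, Set.image_singleton]; rfl
  have h := reflection_map u (ℝ ∙ α)ᗮ
  simp only [hmap] at h
  rw [rootReflection, rootReflection, h]
  rfl

theorem eq_or_eq_neg_of_rootReflection_eq {α β : V} (hα : ‖α‖ = 1) (hβ : ‖β‖ = 1)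
    (h : rootReflection α = rootReflection β) : α = β ∨ α = -β := by
  have hαβ : α = ⟪β, α⟫ • β := by
    have h2 : rootReflection β α = -α := by rw [← h, rootReflection_apply_self]
    rw [rootReflection_apply_of_norm_eq_one hβ] at h2
    apply smul_right_injective V (two_ne_zero (α := ℝ))
    linear_combination (norm := module) h2
  have habs : |⟪β, α⟫| = 1 := by
    simpa [hα, hβ, norm_smul] using (congrArg norm hαβ).symm
  rcases abs_eq zero_le_one |>.1 habs with h1 | h1
  · left; rwa [h1, one_smul] at hαβ
  · right; rwa [h1, neg_one_smul] at hαβ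

theorem isOrthoReflection_iff {g : V ≃ₗᵢ[ℝ] V} :
    IsOrthoReflection g ↔ ∃ α : V, ‖α‖ = 1 ∧ g = rootReflection α := by
  constructor
  · rintro ⟨v, hv, hg⟩
    have hnv : ‖v‖ ≠ 0 := norm_ne_zero_iff.2 hv
    refine ⟨‖v‖⁻¹ • v, by rw [norm_smul, norm_inv, norm_norm, inv_mul_cancel₀ hnv], ?_⟩
    ext w
    rw [rootReflection_smul (inv_ne_zero hnv), hg, rootReflection_apply, real_inner_self_eq_norm_sq]
  · rintro ⟨α, hα, rfl⟩
    refine ⟨α, by rintro rfl; simp at hα, fun w => ?_⟩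
    rw [rootReflection_apply, real_inner_self_eq_norm_sq]

theorem inner_nonneg_of_mem_hull {s : Set V} {v x : V} (hs : ∀ δ ∈ s, 0 ≤ ⟪δ, v⟫)
    (hx : x ∈ PointedCone.hull ℝ s) : 0 ≤ ⟪x, v⟫ := by
  have hv : v ∈ PointedCone.dual (innerₗ V) (PointedCone.hull ℝ s : Set V) := by
    rwa [PointedCone.dual_hull]
  exact hv hx

theorem eq_zero_of_mem_hull_of_inner_eq_zero {s : Set V} {v x : V} (hs : ∀ δ ∈ s, 0 < ⟪δ, v⟫)
    (hx : x ∈ PointedCone.hull ℝ s) (hxv : ⟪x, v⟫ = 0) : x = 0 := by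
  suffices 0 ≤ ⟪x, v⟫ ∧ (⟪x, v⟫ = 0 → x = 0) from this.2 hxv
  clear hxv
  induction hx using Submodule.span_induction with
  | mem δ hδ => exact ⟨(hs δ hδ).le, fun h => absurd h (hs δ hδ).ne'⟩
  | zero => simp
  | add y z _ _ hy hz =>
    rw [inner_add_left]
    refine ⟨add_nonneg hy.1 hz.1, fun h => ?_⟩
    rw [hy.2 (by linarith [hy.1, hz.1]), hz.2 (by linarith [hy.1, hz.1]), add_zero]
  | smul c y _ hy =>
    rw [← Nonneg.coe_smul, real_inner_smul_left]
    refine ⟨mul_nonneg c.2 hy.1, fun h => ?_⟩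
    rcases mul_eq_zero.1 h with hc | h
    · rw [hc, zero_smul]
    · rw [hy.2 h, smul_zero]

theorem exists_inner_pos_of_mem_hull {s : Set V} {x : V} (hx : x ∈ PointedCone.hull ℝ s)
    (hx0 : x ≠ 0) : ∃ δ ∈ s, 0 < ⟪δ, x⟫ := by
  by_contra! h
  have := inner_nonneg_of_mem_hull (v := -x) (fun δ hδ => by simpa using h δ hδ) hx
  rw [inner_neg_right, real_inner_self_eq_norm_sq, neg_nonneg] at this
  exact hx0 (by simpa using le_antisymm this (sq_nonneg ‖x‖))

/-- If all of `s` lies in an open half-space, a vector `α ∈ s` outside the cone spanned by the rest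
of `s` spans an extremal ray of the cone spanned by `s`. -/
theorem exists_nonneg_smul_of_add_eq_smul {s : Set V} {q α β γ : V} {t : ℝ}
    (hs : ∀ δ ∈ s, 0 < ⟪δ, q⟫) (hα : α ∈ s) (hαs : α ∉ PointedCone.hull ℝ (s \ {α}))
    (hβ : β ∈ PointedCone.hull ℝ s) (hγ : γ ∈ PointedCone.hull ℝ s) (h : β + γ = t • α) :
    ∃ b : ℝ, 0 ≤ b ∧ β = b • α := by
  rw [← Set.insert_eq_of_mem hα, ← Set.insert_sdiff_singleton, PointedCone.hull,
    mem_span_insert] at hβ hγ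
  obtain ⟨b, β', hβ', rfl⟩ := hβ
  obtain ⟨c, γ', hγ', rfl⟩ := hγ
  refine ⟨b, b.2, ?_⟩
  have hsum : β' + γ' = (t - b - c) • α := by
    rw [← Nonneg.coe_smul, ← Nonneg.coe_smul] at h
    linear_combination (norm := module) h
  have hs' : ∀ δ ∈ s \ {α}, 0 < ⟪δ, q⟫ := fun δ hδ => hs δ hδ.1
  rcases lt_or_ge 0 (t - b - c) with ht | ht
  · refine absurd ?_ hαs
    rw [← PointedCone.smul_mem_iff _ ht, ← hsum]
    exact add_mem hβ' hγ'
  · have hβq := inner_nonneg_of_mem_hull (fun δ hδ => (hs' δ hδ).le) hβ'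
    have hγq := inner_nonneg_of_mem_hull (fun δ hδ => (hs' δ hδ).le) hγ'
    have hsumq : ⟪β', q⟫ + ⟪γ', q⟫ = (t - b - c) * ⟪α, q⟫ := by
      rw [← inner_add_left, hsum, real_inner_smul_left]
    have hαq := hs α hα
    have hβ'0 : β' = 0 :=
      eq_zero_of_mem_hull_of_inner_eq_zero hs' hβ' (by nlinarith)
    rw [hβ'0, add_zero, Nonneg.coe_smul]

def roots (W : Subgroup (V ≃ₗᵢ[ℝ] V)) : Set V := {α | ‖α‖ = 1 ∧ rootReflection α ∈ W}

def posRoots (W : Subgroup (V ≃ₗᵢ[ℝ] V)) (q : V) : Set V := {α | α ∈ roots W ∧ 0 < ⟪α, q⟫}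

def IsRegular (W : Subgroup (V ≃ₗᵢ[ℝ] V)) (q : V) : Prop := ∀ α ∈ roots W, ⟪α, q⟫ ≠ 0

structure IsSimpleSystem (W : Subgroup (V ≃ₗᵢ[ℝ] V)) (q : V) (Δ : Set V) : Prop where
  subset_posRoots : Δ ⊆ posRoots W q
  posRoots_subset_hull : posRoots W q ⊆ PointedCone.hull ℝ Δ
  notMem_hull_sdiff_singleton : ∀ α ∈ Δ, α ∉ PointedCone.hull ℝ (Δ \ {α})

variable {W : Subgroup (V ≃ₗᵢ[ℝ] V)}

theorem neg_mem_roots {α : V} (hα : α ∈ roots W) : -α ∈ roots W :=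
  ⟨by rw [norm_neg]; exact hα.1, by rw [rootReflection_neg]; exact hα.2⟩

theorem apply_mem_roots {g : V ≃ₗᵢ[ℝ] V} (hg : g ∈ W) {α : V} (hα : α ∈ roots W) :
    g α ∈ roots W :=
  ⟨by rw [g.norm_map]; exact hα.1,
    by rw [← rootReflection_conj]; exact W.mul_mem (W.mul_mem hg hα.2) (W.inv_mem hg)⟩

theorem finite_setOf_rootReflection_eq (g : V ≃ₗᵢ[ℝ] V) :
    {α : V | ‖α‖ = 1 ∧ rootReflection α = g}.Finite := by
  rcases Set.eq_empty_or_nonempty {α : V | ‖α‖ = 1 ∧ rootReflection α = g} with h | ⟨α₀, hα₀, rfl⟩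
  · rw [h]; exact Set.finite_empty
  · refine (Set.toFinite {α₀, -α₀}).subset fun α ⟨hα, h⟩ => ?_
    simpa using eq_or_eq_neg_of_rootReflection_eq hα hα₀ h

theorem roots_finite (hfin : (W : Set (V ≃ₗᵢ[ℝ] V)).Finite) : (roots W).Finite :=
  (hfin.biUnion fun g _ => finite_setOf_rootReflection_eq g).subset
    fun _ hα => Set.mem_biUnion hα.2 ⟨hα.1, rfl⟩

theorem IsRegular.mem_posRoots_or_neg_mem_posRoots {q : V} (hq : IsRegular W q) {α : V}
    (hα : α ∈ roots W) : α ∈ posRoots W q ∨ -α ∈ posRoots W q := by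
  rcases (hq α hα).lt_or_gt with hneg | hpos
  · exact .inr ⟨neg_mem_roots hα, by rw [inner_neg_left]; linarith⟩
  · exact .inl ⟨hα, hpos⟩

theorem exists_isSimpleSystem (hfin : (W : Set (V ≃ₗᵢ[ℝ] V)).Finite) (q : V) :
    ∃ Δ, IsSimpleSystem W q Δ := by
  set S : Set (Set V) := {Δ | Δ ⊆ posRoots W q ∧ posRoots W q ⊆ PointedCone.hull ℝ Δ}
  have hSfin : S.Finite :=
    ((roots_finite hfin).subset fun _ h => h.1).finite_subsets.subset fun _ h => h.1
  obtain ⟨Δ, hΔ⟩ := hSfin.exists_minimal ⟨posRoots W q, subset_rfl, PointedCone.subset_hull⟩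
  refine ⟨Δ, hΔ.prop.1, hΔ.prop.2, fun α hα hαhull => ?_⟩
  have hle : PointedCone.hull ℝ Δ ≤ PointedCone.hull ℝ (Δ \ {α}) := span_le.2 fun δ hδ => by
    by_cases hδα : δ = α
    · rwa [hδα]
    · exact PointedCone.subset_hull ⟨hδ, hδα⟩
  have hmem : Δ \ {α} ∈ S := ⟨Set.sdiff_subset.trans hΔ.prop.1, hΔ.prop.2.trans hle⟩
  have hα' : α ∈ Δ \ {α} := (hΔ.eq_of_le hmem Set.sdiff_subset).symm ▸ hα
  exact hα'.2 rfl

noncomputable def wordProd (l : List V) : V ≃ₗᵢ[ℝ] V := (l.map rootReflection).prod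

@[simp]
theorem wordProd_nil : wordProd ([] : List V) = 1 := rfl

@[simp]
theorem wordProd_cons (α : V) (l : List V) :
    wordProd (α :: l) = rootReflection α * wordProd l := by
  simp [wordProd]

@[simp]
theorem wordProd_append (l₁ l₂ : List V) : wordProd (l₁ ++ l₂) = wordProd l₁ * wordProd l₂ := by
  simp [wordProd]

theorem wordProd_reverse (l : List V) : wordProd l.reverse = (wordProd l)⁻¹ := by
  induction l with
  | nil => simp
  | cons α l ih => simp [ih]

theorem exists_wordProd_eq_of_mem_closure {Δ : Set V} {g : V ≃ₗᵢ[ℝ] V}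
    (hg : g ∈ Subgroup.closure (rootReflection '' Δ)) :
    ∃ l : List V, (∀ δ ∈ l, δ ∈ Δ) ∧ wordProd l = g := by
  induction hg using Subgroup.closure_induction with
  | mem _ h =>
    obtain ⟨δ, hδ, rfl⟩ := h
    exact ⟨[δ], by simpa using hδ, by simp⟩
  | one => exact ⟨[], by simp, rfl⟩
  | mul _ _ _ _ h₁ h₂ =>
    obtain ⟨l₁, hl₁, rfl⟩ := h₁
    obtain ⟨l₂, hl₂, rfl⟩ := h₂
    exact ⟨l₁ ++ l₂, by simp only [List.mem_append]; grind, wordProd_append l₁ l₂⟩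
  | inv _ _ h =>
    obtain ⟨l, hl, rfl⟩ := h
    exact ⟨l.reverse, by simpa using hl, wordProd_reverse l⟩

theorem wordProd_mem {l : List V} (hl : ∀ δ ∈ l, δ ∈ roots W) :
    wordProd l ∈ W :=
  list_prod_mem fun g hg => by
    obtain ⟨δ, hδ, rfl⟩ := List.mem_map.1 hg
    exact (hl δ hδ).2

namespace IsSimpleSystem

variable {q : V} {Δ : Set V}

theorem rootReflection_apply_mem_posRoots (hΔ : IsSimpleSystem W q Δ) (hq : IsRegular W q)
    {α β : V} (hα : α ∈ Δ) (hβ : β ∈ posRoots W q) (hβα : β ≠ α) :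
    rootReflection α β ∈ posRoots W q := by
  obtain ⟨⟨hαu, hαW⟩, -⟩ := hΔ.subset_posRoots hα
  have hsβ : rootReflection α β ∈ roots W := apply_mem_roots hαW hβ.1
  refine (hq.mem_posRoots_or_neg_mem_posRoots hsβ).resolve_right fun hγ => hβα ?_
  obtain ⟨b, hb, rfl⟩ := exists_nonneg_smul_of_add_eq_smul (t := 2 * ⟪α, β⟫)
    (fun δ hδ => (hΔ.subset_posRoots hδ).2) hα (hΔ.notMem_hull_sdiff_singleton α hα)
    (hΔ.posRoots_subset_hull hβ) (hΔ.posRoots_subset_hull hγ)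
    (by rw [rootReflection_apply_of_norm_eq_one hαu]; module)
  have hb1 : b = 1 := by
    simpa [norm_smul, hαu, abs_of_nonneg hb] using hβ.1.1
  rw [hb1, one_smul]

theorem rootReflection_mem_closure (hΔ : IsSimpleSystem W q Δ) (hq : IsRegular W q)
    (hfin : (W : Set (V ≃ₗᵢ[ℝ] V)).Finite) {β : V} (hβ : β ∈ posRoots W q) :
    rootReflection β ∈ Subgroup.closure (rootReflection '' Δ) := by
  set G := Subgroup.closure (rootReflection '' Δ)
  by_contra hβG
  obtain ⟨β, ⟨hβ, hβG⟩, hmin⟩ := ((roots_finite hfin).subset fun _ h => h.1.1).exists_minimalFor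
    (fun γ => ⟪γ, q⟫) {γ | γ ∈ posRoots W q ∧ rootReflection γ ∉ G} ⟨β, hβ, hβG⟩
  obtain ⟨δ, hδ, hδβ⟩ := exists_inner_pos_of_mem_hull (hΔ.posRoots_subset_hull hβ)
    (by rintro rfl; simp [posRoots, roots] at hβ)
  have hδG : rootReflection δ ∈ G :=
    Subgroup.subset_closure ⟨δ, hδ, rfl⟩
  have hβδ : β ≠ δ := by rintro rfl; exact hβG hδG
  obtain ⟨⟨hδu, -⟩, hδq⟩ := hΔ.subset_posRoots hδ
  have hγ := hΔ.rootReflection_apply_mem_posRoots hq hδ hβ hβδ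
  have hγq : ⟪rootReflection δ β, q⟫ < ⟪β, q⟫ := by
    rw [rootReflection_apply_of_norm_eq_one hδu, inner_sub_left, real_inner_smul_left]
    nlinarith
  have hγG : rootReflection (rootReflection δ β) ∈ G := by
    by_contra h
    linarith [hmin ⟨hγ, h⟩ hγq.le]
  have hβγ : rootReflection β =
      rootReflection δ * rootReflection (rootReflection δ β) * (rootReflection δ)⁻¹ := by
    rw [rootReflection_conj, rootReflection_rootReflection]
  exact hβG (hβγ ▸ mul_mem (mul_mem hδG hγG) (inv_mem hδG))

theorem le_closure (hΔ : IsSimpleSystem W q Δ) (hq : IsRegular W q)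
    (hfin : (W : Set (V ≃ₗᵢ[ℝ] V)).Finite)
    (hgen : ∃ R : Set (V ≃ₗᵢ[ℝ] V), (∀ g ∈ R, IsOrthoReflection g) ∧ Subgroup.closure R = W) :
    W ≤ Subgroup.closure (rootReflection '' Δ) := by
  obtain ⟨R, hR, hRW⟩ := hgen
  refine hRW ▸ (Subgroup.closure_le _).2 fun r hr => ?_
  obtain ⟨α, hα, rfl⟩ := isOrthoReflection_iff.1 (hR r hr)
  have hαW : α ∈ roots W := ⟨hα, hRW ▸ Subgroup.subset_closure hr⟩
  rcases hq.mem_posRoots_or_neg_mem_posRoots hαW with hpos | hneg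
  · exact hΔ.rootReflection_mem_closure hq hfin hpos
  · exact rootReflection_neg α ▸ hΔ.rootReflection_mem_closure hq hfin hneg

theorem exists_eq_append_cons_of_inner_neg (hΔ : IsSimpleSystem W q Δ) (hq : IsRegular W q)
    {l : List V} (hl : ∀ δ ∈ l, δ ∈ Δ) {β : V} (hβ : β ∈ posRoots W q)
    (hneg : ⟪wordProd l β, q⟫ < 0) :
    ∃ l₁ δ l₂, l = l₁ ++ δ :: l₂ ∧ wordProd l₂ β = δ := by
  induction l with
  | nil => exact absurd hneg (not_lt.2 hβ.2.le)
  | cons a l ih =>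
    have hl' : ∀ δ ∈ l, δ ∈ Δ := fun δ h => hl δ (List.mem_cons_of_mem a h)
    have hβ' : wordProd l β ∈ roots W :=
      apply_mem_roots (wordProd_mem fun δ h => (hΔ.subset_posRoots (hl' δ h)).1) hβ.1
    rcases hq.mem_posRoots_or_neg_mem_posRoots hβ' with hpos | hneg'
    · by_cases heq : wordProd l β = a
      · exact ⟨[], a, l, rfl, heq⟩
      · have := (hΔ.rootReflection_apply_mem_posRoots hq (hl a List.mem_cons_self) hpos heq).2
        rw [wordProd_cons, LinearIsometryEquiv.coe_mul, Function.comp_apply] at hneg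
        linarith
    · obtain ⟨l₁, δ, l₂, rfl, h⟩ := ih hl' (by simpa using hneg'.2)
      exact ⟨a :: l₁, δ, l₂, rfl, h⟩

theorem wordProd_eq_one (hΔ : IsSimpleSystem W q Δ) (hq : IsRegular W q) {l : List V}
    (hl : ∀ δ ∈ l, δ ∈ Δ) (hpos : ∀ β ∈ posRoots W q, 0 < ⟪wordProd l β, q⟫) :
    wordProd l = 1 := by
  rcases l.eq_nil_or_concat' with rfl | ⟨L, δ, hLδ⟩
  · rfl
  rw [hLδ] at hl hpos ⊢
  have hδ : δ ∈ Δ := hl δ (by simp)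
  have hL : ∀ δ ∈ L, δ ∈ Δ := fun δ h => hl δ (by simp [h])
  have hneg : ⟪wordProd L δ, q⟫ < 0 := by
    have := hpos δ (hΔ.subset_posRoots hδ)
    simp only [wordProd_append, wordProd_cons, wordProd_nil, mul_one, LinearIsometryEquiv.coe_mul,
      Function.comp_apply, rootReflection_apply_self, map_neg, inner_neg_left] at this
    linarith
  obtain ⟨l₁, δ', l₂, hsplit, hδ'⟩ :=
    hΔ.exists_eq_append_cons_of_inner_neg hq hL (hΔ.subset_posRoots hδ) hneg
  -- the letter `δ'` is the conjugate of the last letter `δ` by `wordProd l₂`, so the two cancel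
  have hprod : wordProd (L ++ [δ]) = wordProd (l₁ ++ l₂) := by
    rw [hsplit, ← hδ', wordProd_append, wordProd_append, wordProd_cons, ← rootReflection_conj,
      wordProd_append, wordProd_cons, wordProd_nil, mul_one]
    calc wordProd l₁ * (wordProd l₂ * rootReflection δ * (wordProd l₂)⁻¹ * wordProd l₂)
          * rootReflection δ
        = wordProd l₁ * wordProd l₂ * (rootReflection δ * rootReflection δ) := by group
      _ = wordProd l₁ * wordProd l₂ := by rw [rootReflection_mul_self, mul_one]
  rw [hprod]
  exact hΔ.wordProd_eq_one hq (fun γ h => hL γ (by simp [hsplit] at h ⊢; tauto))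
    fun β hβ => hprod ▸ hpos β hβ
termination_by l.length
decreasing_by simp only [hLδ, hsplit, List.length_append, List.length_cons]; omega

end IsSimpleSystem

theorem eq_one_of_apply_eq_self_of_isRegular (hfin : (W : Set (V ≃ₗᵢ[ℝ] V)).Finite)
    (hgen : ∃ R : Set (V ≃ₗᵢ[ℝ] V), (∀ g ∈ R, IsOrthoReflection g) ∧ Subgroup.closure R = W)
    {q : V} (hq : IsRegular W q) {g : V ≃ₗᵢ[ℝ] V} (hg : g ∈ W) (hgq : g q = q) : g = 1 := by
  obtain ⟨Δ, hΔ⟩ := exists_isSimpleSystem hfin q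
  obtain ⟨l, hl, rfl⟩ := exists_wordProd_eq_of_mem_closure (hΔ.le_closure hq hfin hgen hg)
  refine hΔ.wordProd_eq_one hq hl fun β hβ => ?_
  calc 0 < ⟪β, q⟫ := hβ.2
    _ = ⟪wordProd l β, wordProd l q⟫ := (LinearIsometryEquiv.inner_map_map _ _ _).symm
    _ = ⟪wordProd l β, q⟫ := by rw [hgq]

theorem exists_isRegular_mem (hfin : (W : Set (V ≃ₗᵢ[ℝ] V)).Finite)
    {F : Submodule ℝ V} (hF : ∀ α ∈ roots W, ¬ F ≤ (ℝ ∙ α)ᗮ) : ∃ q ∈ F, IsRegular W q := by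
  have : Finite (roots W) := (roots_finite hfin).to_subtype
  by_contra! h
  obtain ⟨⟨α, hα⟩, hαF⟩ := Subspace.exists_eq_top_of_iUnion_eq_univ
    (p := fun α : roots W => (ℝ ∙ (α : V))ᗮ.comap F.subtype) <| by
      refine Set.eq_univ_of_forall fun ⟨q, hqF⟩ => ?_
      simpa [IsRegular, mem_orthogonal_singleton_iff_inner_right] using h q hqF
  exact hF α hα (comap_subtype_eq_top.1 hαF)

def fixedSubspace (g : V ≃ₗᵢ[ℝ] V) : Submodule ℝ V :=
  LinearMap.ker ((g : V →ₗ[ℝ] V) - LinearMap.id)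

@[simp]
theorem mem_fixedSubspace {g : V ≃ₗᵢ[ℝ] V} {w : V} : w ∈ fixedSubspace g ↔ g w = w := by
  simp [fixedSubspace, sub_eq_zero]

theorem fixedSubspace_rootReflection (α : V) : fixedSubspace (rootReflection α) = (ℝ ∙ α)ᗮ := by
  ext w
  rw [mem_fixedSubspace, rootReflection_apply_eq_self_iff, mem_orthogonal_singleton_iff_inner_right]

theorem mem_orthogonal_fixedSubspace_iff_le {g : V ≃ₗᵢ[ℝ] V} {α : V} :
    α ∈ (fixedSubspace g)ᗮ ↔ fixedSubspace g ≤ (ℝ ∙ α)ᗮ := by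
  rw [← span_singleton_le_iff_mem, ← isOrtho_iff_le, ← isOrtho_iff_le, isOrtho_comm]

theorem exists_root_fixedSubspace_le (hfin : (W : Set (V ≃ₗᵢ[ℝ] V)).Finite)
    (hgen : ∃ R : Set (V ≃ₗᵢ[ℝ] V), (∀ g ∈ R, IsOrthoReflection g) ∧ Subgroup.closure R = W)
    {g : V ≃ₗᵢ[ℝ] V} (hg : g ∈ W) (hg1 : g ≠ 1) :
    ∃ α ∈ roots W, fixedSubspace g ≤ (ℝ ∙ α)ᗮ := by
  by_contra! h
  obtain ⟨q, hqF, hq⟩ := exists_isRegular_mem hfin h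
  exact hg1 (eq_one_of_apply_eq_self_of_isRegular hfin hgen hq hg (mem_fixedSubspace.1 hqF))

variable [FiniteDimensional ℝ V]

theorem exists_apply_eq_sub_of_mem_orthogonal_fixedSubspace {g : V ≃ₗᵢ[ℝ] V} {α : V}
    (hα : α ∈ (fixedSubspace g)ᗮ) : ∃ y, g y = y - α := by
  have hadj : LinearMap.adjoint ((g : V →ₗ[ℝ] V) - LinearMap.id)
      = (g.symm : V →ₗ[ℝ] V) - LinearMap.id := by
    symm
    rw [LinearMap.eq_adjoint_iff]
    intro x y
    simp [inner_sub_left, inner_sub_right, LinearIsometryEquiv.inner_map_eq_flip]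
  rw [fixedSubspace, LinearMap.orthogonal_ker, hadj] at hα
  obtain ⟨z, rfl⟩ := hα
  exact ⟨g.symm z, by simp⟩

theorem fixedSubspace_lt_fixedSubspace_rootReflection_mul {g : V ≃ₗᵢ[ℝ] V} {α : V}
    (hα : ‖α‖ = 1) (hg : fixedSubspace g ≤ (ℝ ∙ α)ᗮ) :
    fixedSubspace g < fixedSubspace (rootReflection α * g) := by
  have hfix : fixedSubspace g ≤ fixedSubspace (rootReflection α * g) := fun w hw => by
    rw [mem_fixedSubspace] at hw ⊢
    rw [LinearIsometryEquiv.coe_mul, Function.comp_apply, hw, rootReflection_apply_eq_self_iff,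
      ← mem_orthogonal_singleton_iff_inner_right]
    exact hg (mem_fixedSubspace.2 hw)
  obtain ⟨y, hy⟩ := exists_apply_eq_sub_of_mem_orthogonal_fixedSubspace
    (mem_orthogonal_fixedSubspace_iff_le.2 hg)
  -- `g` preserves the norm of `y`, which pins down `⟪α, y⟫`
  have hαy : ⟪α, y⟫ = 1 / 2 := by
    have h := congrArg (· ^ 2) (g.norm_map y)
    simp only [hy, norm_sub_sq_real, hα] at h
    linarith [real_inner_comm y α]
  refine SetLike.lt_iff_le_and_exists.2 ⟨hfix, y, ?_, ?_⟩
  · rw [mem_fixedSubspace, LinearIsometryEquiv.coe_mul, Function.comp_apply, hy,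
      rootReflection_apply_of_norm_eq_one hα, inner_sub_right, hαy, real_inner_self_eq_norm_sq, hα]
    module
  · rw [mem_fixedSubspace, hy, sub_eq_self]
    rintro rfl
    simp at hα

theorem mem_closure_reflections_fixing_fixedSubspace (hfin : (W : Set (V ≃ₗᵢ[ℝ] V)).Finite)
    (hgen : ∃ R : Set (V ≃ₗᵢ[ℝ] V), (∀ g ∈ R, IsOrthoReflection g) ∧ Subgroup.closure R = W)
    {g : V ≃ₗᵢ[ℝ] V} (hg : g ∈ W) :
    g ∈ Subgroup.closure
      {h | h ∈ W ∧ IsOrthoReflection h ∧ fixedSubspace g ≤ fixedSubspace h} := by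
  by_cases hg1 : g = 1
  · exact hg1 ▸ one_mem _
  obtain ⟨α, ⟨hαu, hαW⟩, hgα⟩ := exists_root_fixedSubspace_le hfin hgen hg hg1
  have hlt := fixedSubspace_lt_fixedSubspace_rootReflection_mul hαu hgα
  have ih := mem_closure_reflections_fixing_fixedSubspace hfin hgen (W.mul_mem hαW hg)
  have hα : rootReflection α ∈ Subgroup.closure
      {h | h ∈ W ∧ IsOrthoReflection h ∧ fixedSubspace g ≤ fixedSubspace h} :=
    Subgroup.subset_closure
      ⟨hαW, isOrthoReflection_iff.2 ⟨α, hαu, rfl⟩, by rwa [fixedSubspace_rootReflection]⟩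
  have ih' : rootReflection α * g ∈ Subgroup.closure
      {h | h ∈ W ∧ IsOrthoReflection h ∧ fixedSubspace g ≤ fixedSubspace h} := by
    refine Subgroup.closure_mono ?_ ih
    rintro h ⟨hW, hrefl, hfix⟩
    exact ⟨hW, hrefl, hlt.le.trans hfix⟩
  simpa [← mul_assoc] using mul_mem hα ih'
termination_by finrank ℝ V - finrank ℝ (fixedSubspace g)
decreasing_by
  have := finrank_lt_finrank_of_lt hlt
  have := (fixedSubspace (rootReflection α * g)).finrank_le
  omega

end OrthoReflectionGroup

open OrthoReflectionGroup in
/-- For a finite group `W` of orthogonal transformations of a finite-dimensional real inner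
product space generated by orthogonal reflections, the stabilizer of a point `x` is generated
by the reflections in `W` fixing `x`. -/
theorem stmt7 {V : Type*} [NormedAddCommGroup V] [InnerProductSpace ℝ V]
    [FiniteDimensional ℝ V]
    (W : Subgroup (V ≃ₗᵢ[ℝ] V)) (hfin : (W : Set (V ≃ₗᵢ[ℝ] V)).Finite)
    (hgen : ∃ R : Set (V ≃ₗᵢ[ℝ] V), (∀ g ∈ R, IsOrthoReflection g) ∧ Subgroup.closure R = W)
    (x : V) (g : V ≃ₗᵢ[ℝ] V) :
    (g ∈ W ∧ g x = x) ↔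
      g ∈ Subgroup.closure {h : V ≃ₗᵢ[ℝ] V | h ∈ W ∧ IsOrthoReflection h ∧ h x = x} := by
  constructor
  · rintro ⟨hg, hgx⟩
    refine Subgroup.closure_mono ?_ (mem_closure_reflections_fixing_fixedSubspace hfin hgen hg)
    rintro h ⟨hW, hrefl, hfix⟩
    exact ⟨hW, hrefl, mem_fixedSubspace.1 (hfix (mem_fixedSubspace.2 hgx))⟩
  · intro hg
    induction hg using Subgroup.closure_induction with
    | mem h hh => exact ⟨hh.1, hh.2.2⟩
    | one => exact ⟨one_mem W, rfl⟩
    | mul a b _ _ ha hb => exact ⟨mul_mem ha.1 hb.1, by simp [hb.2, ha.2]⟩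
    | inv a _ ha => exact ⟨inv_mem ha.1, by simp [LinearIsometryEquiv.symm_apply_eq, ha.2]⟩
end

section
/- Let E = ℂ/(ℤω₁ ⊕ ℤω₂) be a complex torus with ω₁, ω₂ ∈ ℂ satisfying ω₁·conj(ω₂) − ω₂·conj(ω₁) ≠ 0. The differential equation ∂̄f = a·f·d z̄ for a smooth function f : E → ℂ and constant a ∈ ℂ has a nonzero solution if and only if a·dz̄ is of the form ∂̄ log(χ) for some Lie group homomorphism χ : E → ℂ*; equivalently, writing solutions on ℂ: f(z) = e^{a z̄ + c z + d} must be doubly periodic, which forces a·conj(ω_j) + c·ω_j ∈ 2πi·ℤ for j = 1, 2, and this system has a solution (a, c) for a in a lattice of ℂ of rank 2. -/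
open Complex ComplexConjugate

noncomputable def Umap (a c : ℂ) : ℂ →L[ℝ] ℂ :=
  a • (Complex.conjCLE : ℂ ≃L[ℝ] ℂ).toContinuousLinearMap + c • (ContinuousLinearMap.id ℝ ℂ)

@[simp] lemma Umap_apply (a c w : ℂ) : Umap a c w = a * conj w + c * w := by
  simp [Umap, smul_eq_mul]

lemma hasFDerivAt_expU (a c z : ℂ) :
    HasFDerivAt (fun z => Complex.exp (a * conj z + c * z))
      (Complex.exp (a * conj z + c * z) • Umap a c) z := by
  have h := (Complex.hasDerivAt_exp (Umap a c z)).comp_hasFDerivAt z (Umap a c).hasFDerivAt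
  simpa [Function.comp_def] using h

lemma hasDerivAt_of_CR {g : ℂ → ℂ} {L : ℂ →L[ℝ] ℂ} {z : ℂ}
    (h : HasFDerivAt g L z) (hCR : L Complex.I = L 1 * Complex.I) :
    HasDerivAt g (L 1) z := by
  have key : (ContinuousLinearMap.restrictScalars ℝ
      ((L 1) • (ContinuousLinearMap.id ℂ ℂ))) = L := by
    ext w
    have hw : (L 1) * w = (w.re : ℝ) • L 1 + (w.im : ℝ) • L Complex.I := by
      rw [hCR]
      simp only [Complex.real_smul]
      linear_combination (-(L 1)) * (Complex.re_add_im w)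
    have hw2 : L w = (w.re : ℝ) • L 1 + (w.im : ℝ) • L Complex.I := by
      conv_lhs => rw [show w = (w.re : ℝ) • (1:ℂ) + (w.im : ℝ) • Complex.I by
        simp [Complex.real_smul, Complex.re_add_im]]
      rw [map_add, map_smul, map_smul]
    simp only [ContinuousLinearMap.coe_restrictScalars', ContinuousLinearMap.smul_apply,
      ContinuousLinearMap.id_apply, smul_eq_mul]
    rw [hw, hw2]
  have H : HasFDerivAt g ((L 1) • (ContinuousLinearMap.id ℂ ℂ)) z :=
    hasFDerivAt_of_restrictScalars ℝ h key
  simpa using H.hasDerivAt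

lemma hasFDerivAt_expConj (a z : ℂ) :
    HasFDerivAt (fun z => Complex.exp (-(a * conj z)))
      (Complex.exp (-(a * conj z)) • Umap (-a) 0) z := by
  have h := hasFDerivAt_expU (-a) 0 z
  simpa [neg_mul] using h



lemma im_ne (ω₁ ω₂ : ℂ) (hω : ω₁ * conj ω₂ - ω₂ * conj ω₁ ≠ 0) :
    (ω₁ * conj ω₂).im ≠ 0 := by
  intro h
  apply hω
  have : ω₂ * conj ω₁ = conj (ω₁ * conj ω₂) := by rw [map_mul, Complex.conj_conj]; ring
  rw [this, Complex.sub_conj, h]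
  simp

lemma li_omega (ω₁ ω₂ : ℂ) (hω : ω₁ * conj ω₂ - ω₂ * conj ω₁ ≠ 0) :
    LinearIndependent ℝ ![ω₁, ω₂] := by
  have hd := im_ne ω₁ ω₂ hω
  rw [Complex.mul_im, Complex.conj_re, Complex.conj_im] at hd
  refine LinearIndependent.pair_iff.mpr fun s t hst => ?_
  rw [Complex.real_smul, Complex.real_smul] at hst
  have h1 : s * ω₁.re + t * ω₂.re = 0 := by
    have := congrArg Complex.re hst; simpa using this
  have h2 : s * ω₁.im + t * ω₂.im = 0 := by
    have := congrArg Complex.im hst; simpa using this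
  constructor
  · have hs : s * (ω₁.re * -ω₂.im + ω₁.im * ω₂.re) = 0 := by
      linear_combination ω₂.re * h2 - ω₂.im * h1
    exact (mul_eq_zero.mp hs).resolve_right hd
  · have ht : t * (ω₁.re * -ω₂.im + ω₁.im * ω₂.re) = 0 := by
      linear_combination ω₁.im * h1 - ω₁.re * h2
    exact (mul_eq_zero.mp ht).resolve_right hd


lemma bounded_of_doubly_periodic {ω₁ ω₂ : ℂ} (hli : LinearIndependent ℝ ![ω₁, ω₂])
    {h : ℂ → ℝ} (hc : Continuous h)
    (h1 : ∀ z, h (z + ω₁) = h z) (h2 : ∀ z, h (z + ω₂) = h z) :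
    ∃ C, ∀ z, h z ≤ C := by
  have hcard : Fintype.card (Fin 2) = Module.finrank ℝ ℂ := by
    simp [Complex.finrank_real_complex]
  let B := basisOfLinearIndependentOfCardEqFinrank hli hcard
  have hB : ∀ i, B i = ![ω₁, ω₂] i := fun i => by
    rw [coe_basisOfLinearIndependentOfCardEqFinrank]
  have hrepr : ∀ z : ℂ, z = (B.repr z 0) • ω₁ + (B.repr z 1) • ω₂ := by
    intro z
    conv_lhs => rw [← B.sum_repr z]
    rw [Fin.sum_univ_two, hB 0, hB 1]
    simp
  set K : Set ℂ := (fun p : ℝ × ℝ => p.1 • ω₁ + p.2 • ω₂) '' (Set.Icc 0 1 ×ˢ Set.Icc 0 1)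
    with hK
  have hKcomp : IsCompact K := by
    apply IsCompact.image (isCompact_Icc.prod isCompact_Icc)
    fun_prop
  obtain ⟨C, hC⟩ := hKcomp.exists_bound_of_continuousOn hc.continuousOn
  refine ⟨C, fun z => ?_⟩
  set t₁ := B.repr z 0
  set t₂ := B.repr z 1
  set z' : ℂ := (t₁ - ⌊t₁⌋) • ω₁ + (t₂ - ⌊t₂⌋) • ω₂ with hz'
  have hzz : z = z' + (⌊t₁⌋ : ℤ) • ω₁ + (⌊t₂⌋ : ℤ) • ω₂ := by
    rw [hz', zsmul_eq_mul, zsmul_eq_mul]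
    have := hrepr z
    rw [Complex.real_smul, Complex.real_smul] at this ⊢
    push_cast
    linear_combination this
  have hmem : z' ∈ K := by
    refine ⟨(t₁ - ⌊t₁⌋, t₂ - ⌊t₂⌋), ⟨⟨?_, ?_⟩, ⟨?_, ?_⟩⟩, rfl⟩
    · exact sub_nonneg.mpr (Int.floor_le t₁)
    · show t₁ - (⌊t₁⌋:ℝ) ≤ 1
      linarith [Int.lt_floor_add_one t₁]
    · exact sub_nonneg.mpr (Int.floor_le t₂)
    · show t₂ - (⌊t₂⌋:ℝ) ≤ 1
      linarith [Int.lt_floor_add_one t₂]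
  have hP1 : Function.Periodic h ω₁ := h1
  have hP2 : Function.Periodic h ω₂ := h2
  have : h z = h z' := by
    rw [hzz]
    rw [add_assoc]
    rw [add_comm ((⌊t₁⌋ : ℤ) • ω₁) ((⌊t₂⌋ : ℤ) • ω₂), ← add_assoc]
    rw [hP1.zsmul ⌊t₁⌋ _, hP2.zsmul ⌊t₂⌋ _]
  rw [this]
  calc h z' ≤ ‖h z'‖ := le_abs_self _
    _ ≤ C := hC z' hmem


lemma exists_c0 (ω₁ ω₂ : ℂ) (hd : (ω₁ * conj ω₂).im ≠ 0) (r₁ r₂ : ℝ) :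
    ∃ c₀ : ℂ, (c₀ * ω₁).re = r₁ ∧ (c₀ * ω₂).re = r₂ := by
  rw [Complex.mul_im, Complex.conj_re, Complex.conj_im] at hd
  set d : ℝ := ω₁.re * -ω₂.im + ω₁.im * ω₂.re with hdd
  refine ⟨⟨(-r₁ * ω₂.im + r₂ * ω₁.im) / d, (ω₁.re * r₂ - ω₂.re * r₁) / d⟩, ?_, ?_⟩ <;>
  · rw [Complex.mul_re]
    field_simp
    ring

lemma backward_sol (a c ω₁ ω₂ : ℂ)
    (h1 : ∃ n : ℤ, a * conj ω₁ + c * ω₁ = 2 * (Real.pi : ℂ) * Complex.I * n)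
    (h2 : ∃ n : ℤ, a * conj ω₂ + c * ω₂ = 2 * (Real.pi : ℂ) * Complex.I * n) :
    ∃ f : ℂ → ℂ, ContDiff ℝ (⊤ : ℕ∞) f ∧ (∀ z, f (z + ω₁) = f z) ∧ (∀ z, f (z + ω₂) = f z) ∧
      f ≠ 0 ∧ ∀ z : ℂ,
        (1 / 2) * (fderiv ℝ f z 1 + Complex.I * fderiv ℝ f z Complex.I) = a * f z := by
  refine ⟨fun z => Complex.exp (a * conj z + c * z), ?_, ?_, ?_, ?_, ?_⟩
  · have : (fun z => Complex.exp (a * conj z + c * z)) = Complex.exp ∘ (Umap a c) := by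
      funext z; simp [Function.comp]
    rw [this]
    exact (Complex.contDiff_exp (𝕜 := ℝ)).comp (Umap a c).contDiff
  · obtain ⟨n, hn⟩ := h1
    intro z
    simp only []
    have h1' : Complex.exp (a * conj ω₁ + c * ω₁) = 1 := by
      rw [hn]; exact Complex.exp_eq_one_iff.mpr ⟨n, by ring⟩
    rw [map_add, mul_add, mul_add, show a * conj z + a * conj ω₁ + (c * z + c * ω₁)
      = (a * conj z + c * z) + (a * conj ω₁ + c * ω₁) by ring, Complex.exp_add, h1', mul_one]
  · obtain ⟨n, hn⟩ := h2
    intro z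
    simp only []
    have h1' : Complex.exp (a * conj ω₂ + c * ω₂) = 1 := by
      rw [hn]; exact Complex.exp_eq_one_iff.mpr ⟨n, by ring⟩
    rw [map_add, mul_add, mul_add, show a * conj z + a * conj ω₂ + (c * z + c * ω₂)
      = (a * conj z + c * z) + (a * conj ω₂ + c * ω₂) by ring, Complex.exp_add, h1', mul_one]
  · intro h
    have := congrFun h 0
    simp only [Pi.zero_apply] at this
    exact Complex.exp_ne_zero _ this
  · intro z
    rw [(hasFDerivAt_expU a c z).fderiv]
    set e := Complex.exp (a * conj z + c * z)
    simp only [ContinuousLinearMap.smul_apply, Umap_apply, smul_eq_mul, map_one,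
      Complex.conj_I, mul_one]
    linear_combination (e * (c - a) / 2) * Complex.I_sq

lemma forward_dir (ω₁ ω₂ a : ℂ) (hω : ω₁ * conj ω₂ - ω₂ * conj ω₁ ≠ 0)
    (f : ℂ → ℂ) (hf : ContDiff ℝ (⊤ : ℕ∞) f) (hp1 : ∀ z, f (z + ω₁) = f z)
    (hp2 : ∀ z, f (z + ω₂) = f z) (hne : f ≠ 0)
    (hpde : ∀ z : ℂ,
      (1 / 2) * (fderiv ℝ f z 1 + Complex.I * fderiv ℝ f z Complex.I) = a * f z) :
    ∃ c : ℂ,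
      (∃ n : ℤ, a * conj ω₁ + c * ω₁ = 2 * (Real.pi : ℂ) * Complex.I * n) ∧
      (∃ n : ℤ, a * conj ω₂ + c * ω₂ = 2 * (Real.pi : ℂ) * Complex.I * n) := by
  have hfd : ∀ z, HasFDerivAt f (fderiv ℝ f z) z :=
    fun z => (hf.differentiable (by simp) z).hasFDerivAt
  set g : ℂ → ℂ := fun z => f z * Complex.exp (-(a * conj z)) with hgdef
  -- g is entire
  have hgd : ∀ z, DifferentiableAt ℂ g z := by
    intro z
    set E := Complex.exp (-(a * conj z)) with hE
    have hprod := (hfd z).mul (hasFDerivAt_expConj a z)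
    refine (hasDerivAt_of_CR hprod ?_).differentiableAt
    have hp := hpde z
    simp only [ContinuousLinearMap.add_apply, ContinuousLinearMap.coe_smul',
      Pi.smul_apply, ContinuousLinearMap.smul_apply, Umap_apply, smul_eq_mul, map_one,
      Complex.conj_I, zero_mul, add_zero, mul_one, mul_neg, neg_mul, neg_neg]
    linear_combination (-2 * E * Complex.I) * hp + (E * fderiv ℝ f z Complex.I) * Complex.I_sq
  -- quasi-periodicity of g
  have hgq : ∀ ω : ℂ, (∀ z, f (z + ω) = f z) → ∀ z,
      g (z + ω) = g z * Complex.exp (-(a * conj ω)) := by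
    intro ω hp z
    simp only [hgdef]
    rw [hp z, map_add, show -(a * (conj z + conj ω)) = -(a * conj z) + -(a * conj ω) by ring,
      Complex.exp_add]
    ring
  -- choose c₀ with matching real parts
  obtain ⟨c₀, hc₁, hc₂⟩ := exists_c0 ω₁ ω₂ (im_ne ω₁ ω₂ hω) (a * conj ω₁).re (a * conj ω₂).re
  set G : ℂ → ℂ := fun z => g z * Complex.exp (c₀ * z) with hGdef
  have hGd : Differentiable ℂ G :=
    fun z => (hgd z).mul ((Complex.differentiable_exp.comp
      (differentiable_id.const_mul c₀)) z)
  have hGq : ∀ ω : ℂ, (∀ z, f (z + ω) = f z) → ∀ z,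
      G (z + ω) = G z * Complex.exp (c₀ * ω - a * conj ω) := by
    intro ω hp z
    simp only [hGdef]
    rw [hgq ω hp z, show c₀ * (z + ω) = c₀ * z + c₀ * ω by ring, Complex.exp_add,
      show c₀ * ω - a * conj ω = -(a * conj ω) + c₀ * ω by ring, Complex.exp_add]
    ring
  -- ‖G‖ is doubly periodic
  have hnorm : ∀ ω : ℂ, (∀ z, f (z + ω) = f z) → ((c₀ * ω).re = (a * conj ω).re) →
      ∀ z, ‖G (z + ω)‖ = ‖G z‖ := by
    intro ω hp hre z
    rw [hGq ω hp z, norm_mul, Complex.norm_exp]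
    rw [Complex.sub_re, hre, sub_self, Real.exp_zero, mul_one]
  obtain ⟨C, hC⟩ := bounded_of_doubly_periodic (li_omega ω₁ ω₂ hω)
    (hGd.continuous.norm) (hnorm ω₁ hp1 hc₁) (hnorm ω₂ hp2 hc₂)
  have hb : Bornology.IsBounded (Set.range G) := by
    rw [isBounded_iff_forall_norm_le]
    exact ⟨C, by rintro x ⟨z, rfl⟩; exact hC z⟩
  have hGconst : ∀ z, G z = G 0 := fun z => hGd.apply_eq_apply_of_bounded hb z 0
  -- G 0 ≠ 0
  obtain ⟨z₀, hz₀⟩ := Function.ne_iff.mp hne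
  have hG0 : G 0 ≠ 0 := by
    rw [← hGconst z₀]
    simp only [hGdef, hgdef]
    exact mul_ne_zero (mul_ne_zero hz₀ (Complex.exp_ne_zero _)) (Complex.exp_ne_zero _)
  -- extract the integers
  have key : ∀ ω : ℂ, (∀ z, f (z + ω) = f z) →
      ∃ n : ℤ, a * conj ω + (-c₀) * ω = 2 * (Real.pi : ℂ) * Complex.I * n := by
    intro ω hp
    have h1 : G 0 * Complex.exp (c₀ * ω - a * conj ω) = G 0 := by
      rw [← hGq ω hp 0, hGconst (0 + ω)]
    have h2 : Complex.exp (c₀ * ω - a * conj ω) = 1 := by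
      have := h1
      field_simp [hG0] at this
      exact this
    obtain ⟨n, hn⟩ := Complex.exp_eq_one_iff.mp h2
    exact ⟨-n, by push_cast; linear_combination -hn⟩
  exact ⟨-c₀, key ω₁ hp1, key ω₂ hp2⟩

lemma lattice_part (ω₁ ω₂ : ℂ) (hω : ω₁ * conj ω₂ - ω₂ * conj ω₁ ≠ 0) :
    ∃ lam₁ lam₂ : ℂ, LinearIndependent ℝ ![lam₁, lam₂] ∧
      ∀ a : ℂ,
        (∃ c : ℂ,
          (∃ n : ℤ, a * conj ω₁ + c * ω₁ = 2 * (Real.pi : ℂ) * Complex.I * n) ∧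
          (∃ n : ℤ, a * conj ω₂ + c * ω₂ = 2 * (Real.pi : ℂ) * Complex.I * n)) ↔
        ∃ n₁ n₂ : ℤ, a = n₁ • lam₁ + n₂ • lam₂ := by
  have hπ : (2 * (Real.pi : ℂ) * Complex.I) ≠ 0 := by
    simp [Real.pi_ne_zero, Complex.I_ne_zero, Complex.ofReal_ne_zero]
  set D : ℂ := conj ω₁ * ω₂ - conj ω₂ * ω₁ with hDdef
  have hD : D ≠ 0 := by
    intro h
    apply hω
    rw [hDdef] at h
    linear_combination -h
  have hω₁ : ω₁ ≠ 0 := by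
    intro h
    apply hω
    rw [h]
    simp
  set k : ℂ := 2 * (Real.pi : ℂ) * Complex.I / D with hk
  have hkne : k ≠ 0 := div_ne_zero hπ hD
  refine ⟨k * ω₂, k * (-ω₁), ?_, ?_⟩
  · -- linear independence
    have hli' : LinearIndependent ℝ ![ω₂, -ω₁] := by
      refine LinearIndependent.pair_iff.mpr fun s t hst => ?_
      have hst' : (s : ℂ) * ω₂ - (t : ℂ) * ω₁ = 0 := by
        rw [smul_neg, Complex.real_smul, Complex.real_smul] at hst
        linear_combination hst
      have := (LinearIndependent.pair_iff.mp (li_omega ω₁ ω₂ hω)) (-t) s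
        (by rw [Complex.real_smul, Complex.real_smul]; push_cast; linear_combination hst')
      exact ⟨this.2, neg_eq_zero.mp this.1⟩
    have hinj : Function.Injective (LinearMap.mulLeft ℝ k) := by
      intro x y hxy
      simp only [LinearMap.mulLeft_apply] at hxy
      exact mul_left_cancel₀ hkne hxy
    have := hli'.map' (LinearMap.mulLeft ℝ k) (LinearMap.ker_eq_bot.mpr hinj)
    convert this using 1
    funext i
    fin_cases i <;> simp
    all_goals rfl
  · intro a
    constructor
    · rintro ⟨c, ⟨n₁, e₁⟩, ⟨n₂, e₂⟩⟩
      refine ⟨n₁, n₂, ?_⟩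
      have key : a * D = 2 * (Real.pi : ℂ) * Complex.I * n₁ * ω₂
          - 2 * (Real.pi : ℂ) * Complex.I * n₂ * ω₁ := by
        rw [hDdef]
        linear_combination ω₂ * e₁ - ω₁ * e₂
      rw [zsmul_eq_mul, zsmul_eq_mul, hk]
      field_simp
      linear_combination key
    · rintro ⟨n₁, n₂, ha⟩
      rw [zsmul_eq_mul, zsmul_eq_mul, hk] at ha
      have key : a * D = 2 * (Real.pi : ℂ) * Complex.I * n₁ * ω₂
          - 2 * (Real.pi : ℂ) * Complex.I * n₂ * ω₁ := by
        rw [ha]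
        field_simp
        ring
      refine ⟨(2 * (Real.pi : ℂ) * Complex.I * n₁ - a * conj ω₁) / ω₁, ⟨n₁, ?_⟩, ⟨n₂, ?_⟩⟩
      · field_simp
        ring
      · field_simp
        rw [hDdef] at key
        linear_combination -key


/-- On the complex torus `E = ℂ/(ℤω₁ ⊕ ℤω₂)` (with `ω₁ω̄₂ − ω₂ω̄₁ ≠ 0`), the equation
`∂̄f = a·f·dz̄` has a nonzero smooth doubly periodic solution iff there is `c ∈ ℂ` with
`a·ω̄ⱼ + c·ωⱼ ∈ 2πi·ℤ` for `j = 1, 2`; and the set of such `a` is a rank-2 lattice in `ℂ`. -/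
theorem stmt15 (ω₁ ω₂ : ℂ)
    (hω : ω₁ * (starRingEnd ℂ) ω₂ - ω₂ * (starRingEnd ℂ) ω₁ ≠ 0) :
    (∀ a : ℂ,
      (∃ f : ℂ → ℂ, ContDiff ℝ (⊤ : ℕ∞) f ∧ (∀ z, f (z + ω₁) = f z) ∧ (∀ z, f (z + ω₂) = f z) ∧
          f ≠ 0 ∧ ∀ z : ℂ,
            (1 / 2) * (fderiv ℝ f z 1 + Complex.I * fderiv ℝ f z Complex.I) = a * f z) ↔
      (∃ c : ℂ,
        (∃ n : ℤ, a * (starRingEnd ℂ) ω₁ + c * ω₁ = 2 * (Real.pi : ℂ) * Complex.I * n) ∧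
        (∃ n : ℤ, a * (starRingEnd ℂ) ω₂ + c * ω₂ = 2 * (Real.pi : ℂ) * Complex.I * n))) ∧
    (∃ lam₁ lam₂ : ℂ, LinearIndependent ℝ ![lam₁, lam₂] ∧
      ∀ a : ℂ,
        (∃ c : ℂ,
          (∃ n : ℤ, a * (starRingEnd ℂ) ω₁ + c * ω₁ = 2 * (Real.pi : ℂ) * Complex.I * n) ∧
          (∃ n : ℤ, a * (starRingEnd ℂ) ω₂ + c * ω₂ = 2 * (Real.pi : ℂ) * Complex.I * n)) ↔
        ∃ n₁ n₂ : ℤ, a = n₁ • lam₁ + n₂ • lam₂) := by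
  constructor
  · intro a
    constructor
    · rintro ⟨f, hf, hp1, hp2, hne, hpde⟩
      exact forward_dir ω₁ ω₂ a hω f hf hp1 hp2 hne hpde
    · rintro ⟨c, h1, h2⟩
      exact backward_sol a c ω₁ ω₂ h1 h2
  · exact lattice_part ω₁ ω₂ hω
end
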